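/- Let G=(V,w,m) be a finite connected weighted graph with m(V) = 1, Deg_max ≤ 1, and κ(x,y) ≥ K > 0 for all x ≠ y ∈ V. Let f : V → ℝ satisfy ⟨f⟩ = 0 and ‖∇f‖_∞ ≤ 1. Then for every λ ∈ ℝ, the exponential moment satisfies ⟨e^{λf}⟩ ≤ e^{λ²/(4K)}. -/

import Mathlib

open scoped BigOperators

/-- A weighted graph `G = (V, w, m)`: a symmetric edge-weight function `w`
vanishing on the diagonal, a positive vertex measure `m`, and local finiteness. -/
structure WeightedGraph (V : Type*) where
  w : V → V → ℝ
  m : V → ℝ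
  w_symm : ∀ x y, w x y = w y x
  w_nonneg : ∀ x y, 0 ≤ w x y
  w_diag : ∀ x, w x x = 0
  m_pos : ∀ x, 0 < m x
  locFin : ∀ x, {y | 0 < w x y}.Finite

namespace WeightedGraph

variable {V : Type*} (G : WeightedGraph V)

/-- Adjacency: `x ~ y` iff `w x y > 0`. -/
def Adj (x y : V) : Prop := 0 < G.w x y

/-- The underlying simple graph. -/
def toSimpleGraph : SimpleGraph V where
  Adj x y := 0 < G.w x y
  symm := by constructor; intro x y h; rw [G.w_symm y x]; exact h
  loopless := by constructor; intro x h; rw [G.w_diag] at h; exact lt_irrefl 0 h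

/-- Combinatorial graph distance. -/
noncomputable def d (x y : V) : ℕ := G.toSimpleGraph.dist x y

/-- Transition rate `q(x,y) = w(x,y)/m(x)`. -/
noncomputable def q (x y : V) : ℝ := G.w x y / G.m x

/-- The graph Laplacian `Δf(x) = Σ_y q(x,y) (f(y) - f(x))`. -/
noncomputable def lap (f : V → ℝ) (x : V) : ℝ := ∑ᶠ y, G.q x y * (f y - f x)

/-- The weighted vertex degree `Deg(x) = Σ_y q(x,y)`. -/
noncomputable def Deg (x : V) : ℝ := ∑ᶠ y, G.q x y

/-- The maximal weighted vertex degree. -/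
noncomputable def DegMax : ℝ := ⨆ x, G.Deg x

/-- The minimal transition rate over edges, `q_min = inf_{x ~ y} q(x,y)`. -/
noncomputable def qMin : ℝ := sInf {r : ℝ | ∃ x y, G.Adj x y ∧ r = G.q x y}

/-- `‖∇f‖_∞ = sup_{x ~ y} (f x - f y)/d(x,y)`. -/
noncomputable def gradNorm (f : V → ℝ) : ℝ :=
  sSup {r : ℝ | ∃ x y, G.Adj x y ∧ r = (f x - f y) / (G.d x y : ℝ)}

/-- The Ollivier curvature
`κ(x,y) = inf { ∇_{xy} Δf : ∇_{yx} f = 1, ‖∇f‖_∞ = 1 }`. -/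
noncomputable def kappa (x y : V) : ℝ :=
  sInf {r : ℝ | ∃ f : V → ℝ,
    (f y - f x) / (G.d y x : ℝ) = 1 ∧ G.gradNorm f = 1 ∧
    r = (G.lap f x - G.lap f y) / (G.d x y : ℝ)}

/-- A function is harmonic if `Δf = 0`. -/
def Harmonic (f : V → ℝ) : Prop := ∀ x, G.lap f x = 0

/-- A transport plan between `x₀ ≠ y₀`: a nonnegative function supported on
`B₁(x₀) × B₁(y₀)` whose marginals on the spheres `S₁(x₀)`, `S₁(y₀)` are
`q(x₀,·)` and `q(y₀,·)` respectively. -/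
def IsTransportPlan (x₀ y₀ : V) (ρ : V → V → ℝ) : Prop :=
  (∀ x y, 0 ≤ ρ x y) ∧
  (∀ x y, ρ x y ≠ 0 → G.d x₀ x ≤ 1 ∧ G.d y₀ y ≤ 1) ∧
  (∀ x, G.d x₀ x = 1 → ∑ᶠ y, ρ x y = G.q x₀ x) ∧
  (∀ y, G.d y₀ y = 1 → ∑ᶠ x, ρ x y = G.q y₀ y)

/-- The transport functional `Σ_{x,y} ρ(x,y) (1 - d(x,y)/d(x₀,y₀))`. -/
noncomputable def transportCost (x₀ y₀ : V) (ρ : V → V → ℝ) : ℝ :=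
  ∑ᶠ x, ∑ᶠ y, ρ x y * (1 - (G.d x y : ℝ) / (G.d x₀ y₀ : ℝ))

/-- An optimal transport plan attains the supremum of the transport functional. -/
def IsOptimalTransportPlan (x₀ y₀ : V) (ρ : V → V → ℝ) : Prop :=
  G.IsTransportPlan x₀ y₀ ρ ∧
  ∀ ρ' : V → V → ℝ, G.IsTransportPlan x₀ y₀ ρ' →
    G.transportCost x₀ y₀ ρ' ≤ G.transportCost x₀ y₀ ρ

end WeightedGraph

/-!
Run the discrete heat flow `f ↦ f + sΔf` with a small step `s`. Comparing `f` on an edge `y ~ x`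
with the test function `max f (f x + 1 - d(y, ·))`, which realises the slope `1` needed in `κ(x,y)`,
shows that one step contracts `‖∇f‖_∞` by the factor `1 - sK`. The flow preserves `⟨f⟩`, and by
summation by parts with `(eᵃ - eᵇ)(a - b) ≤ (a - b)²(eᵃ + eᵇ)/2` one step lowers `⟨e^{λf}⟩` by a
factor at least `1 - sλ²‖∇f‖²_∞/2`. The flow converges to `0`, so `⟨e^{λf}⟩` is bounded by the
exponential of a geometric series in `(1 - sK)²`, whose sum tends to `λ²/(4K)` as `s → 0`.
-/

open Finset Filter Topology

namespace Real

lemma exp_sub_one_le_mul_exp_add_one {t : ℝ} (ht : 0 ≤ t) :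
    exp t - 1 ≤ t * (exp t + 1) / 2 := by
  let φ : ℝ → ℝ := fun u => u * (exp u + 1) / 2 - (exp u - 1)
  have hφ : ∀ u, HasDerivAt φ ((1 - exp u + u * exp u) / 2) u := fun u => by
    have := (((hasDerivAt_id u).mul ((hasDerivAt_exp u).add_const 1)).div_const 2).sub
      ((hasDerivAt_exp u).sub_const 1)
    exact this.congr_deriv (by simp only [id]; ring)
  -- `φ' ≥ 0` is `exp u * (1 - u) ≤ exp u * exp (-u) = 1`
  have hmono : Monotone φ := monotone_of_deriv_nonneg (fun u => (hφ u).differentiableAt)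
    fun u => by
      rw [(hφ u).deriv]
      have := mul_le_mul_of_nonneg_left (one_sub_le_exp_neg u) (exp_pos u).le
      rw [← exp_add, add_neg_cancel, exp_zero] at this
      linarith
  have := hmono ht
  simp only [φ, exp_zero] at this
  linarith

lemma exp_sub_exp_mul_sub_le (a b : ℝ) :
    (exp a - exp b) * (a - b) ≤ (a - b) ^ 2 * ((exp a + exp b) / 2) := by
  wlog hba : b ≤ a generalizing a b
  · have := this b a (le_of_not_ge hba)
    linarith
  have key := mul_le_mul_of_nonneg_left (exp_sub_one_le_mul_exp_add_one (sub_nonneg.2 hba))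
    (mul_nonneg (exp_pos b).le (sub_nonneg.2 hba))
  have hexp : exp a = exp b * exp (a - b) := by rw [← exp_add, add_sub_cancel]
  rw [hexp]
  linarith

lemma one_le_one_sub_mul_exp_div {a A : ℝ} (ha : 0 ≤ a) (haA : a ≤ A) (hA : A < 1) :
    1 ≤ (1 - a) * exp (a / (1 - A)) := by
  have h1a : 0 < 1 - a := by linarith
  calc 1 = (1 - a) * (a / (1 - a) + 1) := by field_simp; ring
    _ ≤ (1 - a) * exp (a / (1 - a)) := by gcongr; exact add_one_le_exp _
    _ ≤ (1 - a) * exp (a / (1 - A)) := by gcongr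

lemma le_mul_exp_sum {Φ b : ℕ → ℝ} (h : ∀ n, Φ n ≤ Φ (n + 1) * exp (b n)) (N : ℕ) :
    Φ 0 ≤ Φ N * exp (∑ n ∈ range N, b n) := by
  induction N with
  | zero => simp
  | succ N ih =>
    calc Φ 0 ≤ Φ N * exp (∑ n ∈ range N, b n) := ih
      _ ≤ Φ (N + 1) * exp (b N) * exp (∑ n ∈ range N, b n) := by gcongr; exact h N
      _ = Φ (N + 1) * exp (∑ n ∈ range (N + 1), b n) := by
        rw [sum_range_succ, exp_add]; ring

lemma le_exp_of_le_mul_exp {Φ b : ℕ → ℝ} {S : ℝ} (hΦ : ∀ n, 0 ≤ Φ n)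
    (h : ∀ n, Φ n ≤ Φ (n + 1) * exp (b n)) (hb : ∀ N, ∑ n ∈ range N, b n ≤ S)
    (hlim : Tendsto Φ atTop (𝓝 1)) : Φ 0 ≤ exp S := by
  simpa using ge_of_tendsto' (hlim.mul_const (exp S)) fun N =>
    (le_mul_exp_sum h N).trans (mul_le_mul_of_nonneg_left (exp_le_exp.2 (hb N)) (hΦ N))

end Real

namespace WeightedGraph

variable {V : Type*} (G : WeightedGraph V)

lemma q_nonneg (x y : V) : 0 ≤ G.q x y := div_nonneg (G.w_nonneg x y) (G.m_pos x).le

lemma w_eq_zero_of_not_adj {x y : V} (h : ¬ G.Adj x y) : G.w x y = 0 :=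
  le_antisymm (not_lt.1 h) (G.w_nonneg x y)

lemma q_eq_zero_of_not_adj {x y : V} (h : ¬ G.Adj x y) : G.q x y = 0 := by
  rw [q, G.w_eq_zero_of_not_adj h, zero_div]

lemma m_mul_q (x y : V) : G.m x * G.q x y = G.w x y :=
  mul_div_cancel₀ _ (G.m_pos x).ne'

variable {G}

lemma Adj.symm {x y : V} (h : G.Adj x y) : G.Adj y x := G.toSimpleGraph.adj_symm h

lemma Adj.ne {x y : V} (h : G.Adj x y) : x ≠ y := G.toSimpleGraph.ne_of_adj h

lemma Adj.d_eq_one {x y : V} (h : G.Adj x y) : G.d x y = 1 :=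
  SimpleGraph.dist_eq_one_iff_adj.2 h

variable (G)

def LipschitzOnEdges (L : ℝ) (f : V → ℝ) : Prop := ∀ ⦃x y⦄, G.Adj x y → f x - f y ≤ L

noncomputable def heatStep (s : ℝ) (f : V → ℝ) : V → ℝ := fun x => f x + s * G.lap f x

variable {G}

namespace LipschitzOnEdges

variable {L : ℝ} {f : V → ℝ}

lemma abs_sub_le (hf : G.LipschitzOnEdges L f) {x y : V} (h : G.Adj x y) : |f x - f y| ≤ L :=
  abs_sub_le_iff.2 ⟨hf h, hf h.symm⟩

lemma const_mul (hf : G.LipschitzOnEdges L f) (c : ℝ) :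
    G.LipschitzOnEdges (|c| * L) (fun z => c * f z) := fun x y h =>
  calc c * f x - c * f y ≤ |c * (f x - f y)| := by rw [mul_sub]; exact le_abs_self _
    _ = |c| * |f x - f y| := abs_mul c _
    _ ≤ |c| * L := mul_le_mul_of_nonneg_left (hf.abs_sub_le h) (abs_nonneg c)

lemma sub_le_mul_length (hf : G.LipschitzOnEdges L f) {u v : V}
    (p : G.toSimpleGraph.Walk u v) : f u - f v ≤ L * p.length := by
  induction p with
  | nil => simp
  | cons h p ih =>
    rw [SimpleGraph.Walk.length_cons, Nat.cast_succ]
    linarith [hf h]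

lemma sub_le_mul_d (hf : G.LipschitzOnEdges L f) (hconn : G.toSimpleGraph.Connected)
    (u v : V) : f u - f v ≤ L * G.d u v := by
  obtain ⟨p, hp⟩ := hconn.exists_walk_length_eq_dist u v
  have := hf.sub_le_mul_length p
  rwa [hp] at this

end LipschitzOnEdges

variable (G) [Fintype V]

lemma lap_eq_sum (f : V → ℝ) (x : V) : G.lap f x = ∑ y, G.q x y * (f y - f x) :=
  finsum_eq_sum_of_fintype _

lemma Deg_eq_sum (x : V) : G.Deg x = ∑ y, G.q x y := finsum_eq_sum_of_fintype _

lemma lap_const_mul (c : ℝ) (f : V → ℝ) (x : V) :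
    G.lap (fun z => c * f z) x = c * G.lap f x := by
  simp only [lap_eq_sum, mul_sum]
  exact sum_congr rfl fun y _ => by ring

lemma sub_le_gradNorm (f : V → ℝ) {x y : V} (h : G.Adj x y) : f x - f y ≤ G.gradNorm f := by
  have hbdd : BddAbove {r : ℝ | ∃ x y, G.Adj x y ∧ r = (f x - f y) / (G.d x y : ℝ)} :=
    (Set.finite_range fun p : V × V => (f p.1 - f p.2) / (G.d p.1 p.2 : ℝ)).bddAbove.mono
      (by rintro _ ⟨x, y, _, rfl⟩; exact ⟨(x, y), rfl⟩)
  simpa [gradNorm, h.d_eq_one] using le_csSup hbdd ⟨x, y, h, rfl⟩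

lemma lipschitzOnEdges_of_gradNorm_le {f : V → ℝ} {L : ℝ} (hf : G.gradNorm f ≤ L) :
    G.LipschitzOnEdges L f := fun _ _ h => (G.sub_le_gradNorm f h).trans hf

lemma gradNorm_eq_of_lipschitzOnEdges {f : V → ℝ} {L : ℝ} (hf : G.LipschitzOnEdges L f)
    {x y : V} (hxy : G.Adj x y) (hL : f x - f y = L) : G.gradNorm f = L := by
  refine le_antisymm (csSup_le ⟨_, x, y, hxy, rfl⟩ ?_) (hL ▸ G.sub_le_gradNorm f hxy)
  rintro r ⟨u, v, huv, rfl⟩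
  simpa [huv.d_eq_one] using hf huv

lemma abs_lap_le {g : V → ℝ} {L : ℝ} (hg : G.LipschitzOnEdges L g) (z : V) :
    |G.lap g z| ≤ L * G.Deg z := by
  rw [lap_eq_sum, Deg_eq_sum, mul_sum]
  refine (abs_sum_le_sum_abs _ _).trans (sum_le_sum fun y _ => ?_)
  rw [abs_mul, abs_of_nonneg (G.q_nonneg z y), mul_comm L]
  by_cases h : G.Adj z y
  · exact mul_le_mul_of_nonneg_left (hg.abs_sub_le h.symm) (G.q_nonneg z y)
  · simp [G.q_eq_zero_of_not_adj h]

lemma kappa_le_lap_sub_lap {g : V → ℝ} (hg : G.LipschitzOnEdges 1 g) {x y : V}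
    (hxy : G.Adj x y) (hgyx : g y - g x = 1) : G.kappa x y ≤ G.lap g x - G.lap g y := by
  refine csInf_le ⟨-(G.Deg x + G.Deg y), ?_⟩ ⟨g, by simp [hxy.symm.d_eq_one, hgyx],
    G.gradNorm_eq_of_lipschitzOnEdges hg hxy.symm hgyx, by simp [hxy.d_eq_one]⟩
  rintro _ ⟨g', -, hg', rfl⟩
  have hg'1 := G.lipschitzOnEdges_of_gradNorm_le hg'.le
  have hx := abs_le.1 (G.abs_lap_le hg'1 x)
  have hy := abs_le.1 (G.abs_lap_le hg'1 y)
  rw [hxy.d_eq_one, Nat.cast_one, div_one]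
  linarith [hx.1, hy.2]

lemma lap_le_lap_add_mul_Deg {u v : V → ℝ} {x : V} {ε : ℝ}
    (h : ∀ z, u z - v z ≤ u x - v x + ε) : G.lap u x ≤ G.lap v x + ε * G.Deg x := by
  rw [lap_eq_sum, lap_eq_sum, Deg_eq_sum, mul_sum, ← sum_add_distrib]
  refine sum_le_sum fun z _ => ?_
  have := mul_le_mul_of_nonneg_left (h z) (G.q_nonneg x z)
  linarith

lemma lap_sub_lap_ge (hconn : G.toSimpleGraph.Connected) (hDeg : ∀ x, G.Deg x ≤ 1)
    {K : ℝ} {f : V → ℝ} (hf : G.LipschitzOnEdges 1 f) {x y : V} (hxy : G.Adj x y)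
    (hκ : K ≤ G.kappa x y) : K - 2 * (1 - (f y - f x)) ≤ G.lap f x - G.lap f y := by
  set ε := 1 - (f y - f x)
  have hε : 0 ≤ ε := sub_nonneg.2 (hf hxy.symm)
  -- `g` is the least function `≥ f` with `‖∇g‖_∞ ≤ 1` and `g y ≥ f x + 1`; `g - f` takes values
  -- in `[0, ε]`, is `0` at `x` and `ε` at `y`, so `Δg` and `Δf` differ by at most `ε` there.
  let g : V → ℝ := fun z => max (f z) (f x + 1 - G.d y z)
  have hgx : g x = f x := max_eq_left (by simp [hxy.symm.d_eq_one])
  have hgy : g y = f x + 1 := by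
    have hdyy : G.d y y = 0 := SimpleGraph.dist_self
    simp only [g, hdyy, Nat.cast_zero, sub_zero]
    exact max_eq_right (by linarith [hf hxy.symm])
  have hg : G.LipschitzOnEdges 1 g := by
    intro u v huv
    have htri : (G.d y v : ℝ) ≤ G.d y u + 1 := by
      have := hconn.dist_triangle (u := y) (v := u) (w := v)
      rw [← d, ← d, ← d, huv.d_eq_one] at this
      exact_mod_cast this
    have hv : f v ≤ g v := le_max_left _ _
    have hv' : f x + 1 - G.d y v ≤ g v := le_max_right _ _
    have : g u ≤ g v + 1 := max_le (by linarith [hf huv]) (by linarith)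
    linarith
  have hlapx : G.lap g x ≤ G.lap f x + ε * G.Deg x := by
    refine G.lap_le_lap_add_mul_Deg fun z => ?_
    have := hf.sub_le_mul_d hconn y z
    have : g z ≤ f z + ε := max_le (by linarith) (by linarith)
    linarith
  have hlapy : G.lap f y ≤ G.lap g y + ε * G.Deg y :=
    G.lap_le_lap_add_mul_Deg fun z => by linarith [le_max_left (f z) (f x + 1 - G.d y z)]
  have hκg := hκ.trans (G.kappa_le_lap_sub_lap hg hxy (by rw [hgy, hgx]; ring))
  linarith [mul_le_of_le_one_right hε (hDeg x), mul_le_of_le_one_right hε (hDeg y)]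

lemma heatStep_const_mul (s c : ℝ) (f : V → ℝ) :
    G.heatStep s (fun z => c * f z) = fun z => c * G.heatStep s f z := by
  funext z
  simp only [heatStep, lap_const_mul]
  ring

lemma lipschitzOnEdges_heatStep_of_one (hconn : G.toSimpleGraph.Connected)
    (hDeg : ∀ x, G.Deg x ≤ 1) {K : ℝ} (hκ : ∀ x y : V, x ≠ y → K ≤ G.kappa x y)
    {s : ℝ} (hs0 : 0 ≤ s) (hs : s ≤ 1 / 2) {f : V → ℝ} (hf : G.LipschitzOnEdges 1 f) :
    G.LipschitzOnEdges (1 - s * K) (G.heatStep s f) := by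
  intro u v huv
  have hcurv := mul_le_mul_of_nonneg_left
    (G.lap_sub_lap_ge hconn hDeg hf huv.symm (hκ v u huv.symm.ne)) hs0
  have hslope := mul_le_mul_of_nonneg_left (hf huv) (by linarith : 0 ≤ 1 - 2 * s)
  simp only [heatStep]
  linarith

variable {G} in
lemma LipschitzOnEdges.heatStep (hconn : G.toSimpleGraph.Connected)
    (hDeg : ∀ x, G.Deg x ≤ 1) {K : ℝ} (hκ : ∀ x y : V, x ≠ y → K ≤ G.kappa x y)
    {s : ℝ} (hs0 : 0 ≤ s) (hs : s ≤ 1 / 2) {L : ℝ} (hL : 0 < L) {f : V → ℝ}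
    (hf : G.LipschitzOnEdges L f) :
    G.LipschitzOnEdges ((1 - s * K) * L) (G.heatStep s f) := by
  have hf1 : G.LipschitzOnEdges 1 (fun z => L⁻¹ * f z) := by
    simpa [abs_of_pos hL, hL.ne'] using hf.const_mul L⁻¹
  have := (G.lipschitzOnEdges_heatStep_of_one hconn hDeg hκ hs0 hs hf1).const_mul L
  rw [G.heatStep_const_mul, abs_of_pos hL] at this
  convert this using 1
  · ring
  · funext z
    exact (mul_inv_cancel_left₀ hL.ne' _).symm

lemma lipschitzOnEdges_iterate_heatStep (hconn : G.toSimpleGraph.Connected)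
    (hDeg : ∀ x, G.Deg x ≤ 1) {K : ℝ} (hκ : ∀ x y : V, x ≠ y → K ≤ G.kappa x y)
    {s : ℝ} (hs0 : 0 ≤ s) (hs : s ≤ 1 / 2) (hsK : s * K < 1) {f : V → ℝ}
    (hf : G.LipschitzOnEdges 1 f) (n : ℕ) :
    G.LipschitzOnEdges ((1 - s * K) ^ n) ((G.heatStep s)^[n] f) := by
  induction n with
  | zero => simpa using hf
  | succ n ih =>
    rw [Function.iterate_succ_apply', pow_succ']
    exact ih.heatStep hconn hDeg hκ hs0 hs (pow_pos (sub_pos.2 hsK) n)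

lemma sum_sum_w_mul_swap (F : V → V → ℝ) :
    ∑ x, ∑ y, G.w x y * F x y = ∑ x, ∑ y, G.w x y * F y x := by
  rw [sum_comm]
  exact sum_congr rfl fun x _ => sum_congr rfl fun y _ => by rw [G.w_symm]

lemma sum_m_mul_lap (u g : V → ℝ) :
    ∑ x, G.m x * (u x * G.lap g x) =
      -(1 / 2) * ∑ x, ∑ y, G.w x y * ((u x - u y) * (g x - g y)) := by
  have hw : ∑ x, G.m x * (u x * G.lap g x) = ∑ x, ∑ y, G.w x y * (u x * (g y - g x)) := by
    refine sum_congr rfl fun x _ => ?_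
    rw [lap_eq_sum, mul_sum, mul_sum]
    refine sum_congr rfl fun y _ => ?_
    rw [← G.m_mul_q]
    ring
  have hswap := G.sum_sum_w_mul_swap fun x y => u x * (g y - g x)
  have hsum : ∑ x, ∑ y, G.w x y * (u x * (g y - g x)) +
      ∑ x, ∑ y, G.w x y * (u y * (g x - g y)) =
      -∑ x, ∑ y, G.w x y * ((u x - u y) * (g x - g y)) := by
    simp only [← sum_add_distrib, ← sum_neg_distrib]
    exact sum_congr rfl fun x _ => sum_congr rfl fun y _ => by ring
  linarith

lemma sum_m_mul_lap_eq_zero (g : V → ℝ) : ∑ x, G.m x * G.lap g x = 0 := by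
  simpa using G.sum_m_mul_lap 1 g

lemma sum_m_mul_iterate_heatStep (s : ℝ) (f : V → ℝ) (n : ℕ) :
    ∑ x, G.m x * (G.heatStep s)^[n] f x = ∑ x, G.m x * f x := by
  induction n with
  | zero => rfl
  | succ n ih =>
    simp only [Function.iterate_succ_apply', heatStep, mul_add, sum_add_distrib,
      mul_left_comm _ s, ← mul_sum, sum_m_mul_lap_eq_zero, mul_zero, add_zero, ih]

lemma abs_le_mul_diam (hconn : G.toSimpleGraph.Connected) {L : ℝ} (hL : 0 ≤ L)
    {f : V → ℝ} (hf : G.LipschitzOnEdges L f) (hmean : ∑ x, G.m x * f x = 0) (x : V) :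
    |f x| ≤ L * G.toSimpleGraph.diam := by
  have := hconn.nonempty
  have hne : (univ : Finset V).Nonempty := univ_nonempty
  have hd : ∀ u v, L * G.d u v ≤ L * G.toSimpleGraph.diam := fun u v => by
    gcongr
    exact SimpleGraph.dist_le_diam (G.toSimpleGraph.connected_iff_ediam_ne_top.1 hconn)
  obtain ⟨z₀, -, hz₀⟩ := exists_le_of_sum_le hne (hmean.trans sum_const_zero.symm).le
  obtain ⟨z₁, -, hz₁⟩ := exists_le_of_sum_le hne (sum_const_zero.trans hmean.symm).le
  have h₀ : f z₀ ≤ 0 := nonpos_of_mul_nonpos_right hz₀ (G.m_pos z₀)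
  have h₁ : 0 ≤ f z₁ := nonneg_of_mul_nonneg_right hz₁ (G.m_pos z₁)
  rw [abs_le]
  constructor <;> linarith [hf.sub_le_mul_d hconn x z₀, hf.sub_le_mul_d hconn z₁ x,
    hd x z₀, hd z₁ x]

lemma tendsto_sum_m_exp_of_lipschitzOnEdges (hconn : G.toSimpleGraph.Connected)
    (hm : ∑ x, G.m x = 1) {F : ℕ → V → ℝ} {L : ℕ → ℝ} (hL0 : ∀ n, 0 ≤ L n)
    (hL : Tendsto L atTop (𝓝 0)) (hF : ∀ n, G.LipschitzOnEdges (L n) (F n))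
    (hmean : ∀ n, ∑ x, G.m x * F n x = 0) (lam : ℝ) :
    Tendsto (fun n => ∑ x, G.m x * Real.exp (lam * F n x)) atTop (𝓝 1) := by
  have hF0 : ∀ x, Tendsto (fun n => F n x) atTop (𝓝 0) := fun x =>
    squeeze_zero_norm (fun n => G.abs_le_mul_diam hconn (hL0 n) (hF n) (hmean n) x)
      (by simpa using hL.mul_const (G.toSimpleGraph.diam : ℝ))
  simpa [hm] using tendsto_finsetSum univ fun x _ =>
    ((Real.continuous_exp.tendsto _).comp ((hF0 x).const_mul lam)).const_mul (G.m x)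

lemma sum_sum_w_mul (u : V → ℝ) : ∑ x, ∑ y, G.w x y * u x = ∑ x, G.m x * G.Deg x * u x := by
  refine sum_congr rfl fun x _ => ?_
  rw [← sum_mul, Deg_eq_sum, mul_sum]
  simp only [m_mul_q]

lemma sum_m_exp_mul_lap_ge (hDeg : ∀ x, G.Deg x ≤ 1) {C : ℝ} {g : V → ℝ}
    (hg : G.LipschitzOnEdges C g) :
    -(C ^ 2 / 2) * ∑ x, G.m x * Real.exp (g x) ≤
      ∑ x, G.m x * (Real.exp (g x) * G.lap g x) := by
  have hterm : ∀ x y, G.w x y * ((Real.exp (g x) - Real.exp (g y)) * (g x - g y)) ≤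
      C ^ 2 / 2 * (G.w x y * Real.exp (g x) + G.w x y * Real.exp (g y)) := by
    intro x y
    by_cases h : G.Adj x y
    · have hsq : (g x - g y) ^ 2 ≤ C ^ 2 := sq_le_sq' (abs_le.1 (hg.abs_sub_le h)).1 (hg h)
      have := (Real.exp_sub_exp_mul_sub_le (g x) (g y)).trans
        (mul_le_mul_of_nonneg_right hsq (by positivity))
      linarith [mul_le_mul_of_nonneg_left this (G.w_nonneg x y)]
    · simp [G.w_eq_zero_of_not_adj h]
  have hsymm := G.sum_sum_w_mul_swap fun _ y => Real.exp (g y)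
  have hDeg' : ∑ x, ∑ y, G.w x y * Real.exp (g x) ≤ ∑ x, G.m x * Real.exp (g x) := by
    rw [sum_sum_w_mul]
    exact sum_le_sum fun x _ => mul_le_mul_of_nonneg_right
      (mul_le_of_le_one_right (G.m_pos x).le (hDeg x)) (Real.exp_pos _).le
  have hS : ∑ x, ∑ y, G.w x y * ((Real.exp (g x) - Real.exp (g y)) * (g x - g y)) ≤
      C ^ 2 * ∑ x, G.m x * Real.exp (g x) :=
    calc _ ≤ ∑ x, ∑ y, C ^ 2 / 2 * (G.w x y * Real.exp (g x) + G.w x y * Real.exp (g y)) :=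
          sum_le_sum fun x _ => sum_le_sum fun y _ => hterm x y
      _ = C ^ 2 * ∑ x, ∑ y, G.w x y * Real.exp (g x) := by
          simp only [← mul_sum, sum_add_distrib, hsymm]
          ring
      _ ≤ C ^ 2 * ∑ x, G.m x * Real.exp (g x) := by gcongr
  rw [sum_m_mul_lap]
  linarith

lemma sum_m_exp_heatStep_ge (hDeg : ∀ x, G.Deg x ≤ 1) {C : ℝ} {g : V → ℝ}
    (hg : G.LipschitzOnEdges C g) {s : ℝ} (hs : 0 ≤ s) :
    (1 - s * C ^ 2 / 2) * ∑ x, G.m x * Real.exp (g x) ≤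
      ∑ x, G.m x * Real.exp (G.heatStep s g x) := by
  have hpt : ∀ x, G.m x * Real.exp (g x) + s * (G.m x * (Real.exp (g x) * G.lap g x)) ≤
      G.m x * Real.exp (G.heatStep s g x) := fun x =>
    calc _ = G.m x * Real.exp (g x) * (s * G.lap g x + 1) := by ring
      _ ≤ G.m x * Real.exp (g x) * Real.exp (s * G.lap g x) := by
          gcongr
          · exact mul_nonneg (G.m_pos x).le (Real.exp_pos _).le
          · exact Real.add_one_le_exp _
      _ = G.m x * Real.exp (G.heatStep s g x) := by rw [heatStep, Real.exp_add]; ring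
  calc _ = ∑ x, G.m x * Real.exp (g x) + s * (-(C ^ 2 / 2) * ∑ x, G.m x * Real.exp (g x)) := by
        ring
    _ ≤ ∑ x, G.m x * Real.exp (g x) + s * ∑ x, G.m x * (Real.exp (g x) * G.lap g x) := by
        gcongr
        exact G.sum_m_exp_mul_lap_ge hDeg hg
    _ = ∑ x, (G.m x * Real.exp (g x) + s * (G.m x * (Real.exp (g x) * G.lap g x))) := by
        rw [sum_add_distrib, mul_sum]
    _ ≤ _ := sum_le_sum fun x _ => hpt x

lemma sum_m_exp_le_heatStep (hDeg : ∀ x, G.Deg x ≤ 1) {L : ℝ} {f : V → ℝ}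
    (hf : G.LipschitzOnEdges L f) {s : ℝ} (hs : 0 ≤ s) (lam : ℝ) {A : ℝ} (hA : A < 1)
    (hLA : s * lam ^ 2 * L ^ 2 / 2 ≤ A) :
    ∑ x, G.m x * Real.exp (lam * f x) ≤
      (∑ x, G.m x * Real.exp (lam * G.heatStep s f x)) *
        Real.exp (s * lam ^ 2 * L ^ 2 / 2 / (1 - A)) := by
  have henergy := G.sum_m_exp_heatStep_ge hDeg (hf.const_mul lam) hs
  rw [G.heatStep_const_mul, mul_pow, sq_abs] at henergy
  have hone := Real.one_le_one_sub_mul_exp_div (by positivity) hLA hA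
  have hΦ : 0 ≤ ∑ x, G.m x * Real.exp (lam * f x) :=
    sum_nonneg fun x _ => mul_nonneg (G.m_pos x).le (Real.exp_pos _).le
  calc _ ≤ (∑ x, G.m x * Real.exp (lam * f x)) * ((1 - s * lam ^ 2 * L ^ 2 / 2) *
        Real.exp (s * lam ^ 2 * L ^ 2 / 2 / (1 - A))) := le_mul_of_one_le_right hΦ hone
    _ = (1 - s * (lam ^ 2 * L ^ 2) / 2) * (∑ x, G.m x * Real.exp (lam * f x)) *
        Real.exp (s * lam ^ 2 * L ^ 2 / 2 / (1 - A)) := by ring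
    _ ≤ _ := by gcongr

theorem exponential_moment_bound_of_step (hconn : G.toSimpleGraph.Connected)
    (hm : ∑ x, G.m x = 1) (hDeg : ∀ x, G.Deg x ≤ 1) {K : ℝ} (hK : 0 < K)
    (hκ : ∀ x y : V, x ≠ y → K ≤ G.kappa x y) {f : V → ℝ} (hf : G.LipschitzOnEdges 1 f)
    (hmean : ∑ x, G.m x * f x = 0) (lam : ℝ) {s : ℝ} (hs0 : 0 < s) (hs : s ≤ 1 / 2)
    (hsK : s * K < 1) (hsl : s * lam ^ 2 < 2) :
    ∑ x, G.m x * Real.exp (lam * f x) ≤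
      Real.exp (lam ^ 2 / (K * (2 - s * K) * (2 - s * lam ^ 2))) := by
  set r := 1 - s * K
  set A := s * lam ^ 2 / 2
  let F : ℕ → V → ℝ := fun n => (G.heatStep s)^[n] f
  have hr0 : 0 < r := sub_pos.2 hsK
  have hr1 : r < 1 := by linarith [mul_pos hs0 hK]
  have hA : A < 1 := by simp only [A]; linarith
  have hLip : ∀ n, G.LipschitzOnEdges (r ^ n) (F n) :=
    G.lipschitzOnEdges_iterate_heatStep hconn hDeg hκ hs0.le hs hsK hf
  have hstep : ∀ n, ∑ x, G.m x * Real.exp (lam * F n x) ≤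
      (∑ x, G.m x * Real.exp (lam * F (n + 1) x)) * Real.exp (A * (r ^ 2) ^ n / (1 - A)) := by
    intro n
    have hrn : (r ^ n) ^ 2 ≤ 1 := pow_le_one₀ (by positivity) (pow_le_one₀ hr0.le hr1.le)
    have := G.sum_m_exp_le_heatStep hDeg (hLip n) hs0.le lam hA
      (by simp only [A]; nlinarith [mul_nonneg hs0.le (sq_nonneg lam)])
    have hb : s * lam ^ 2 * (r ^ n) ^ 2 / 2 / (1 - A) = A * (r ^ 2) ^ n / (1 - A) := by
      rw [← pow_mul, mul_comm n, pow_mul]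
      ring
    rw [hb] at this
    simpa only [F, Function.iterate_succ_apply'] using this
  have hsum : ∀ N, ∑ n ∈ range N, A * (r ^ 2) ^ n / (1 - A) ≤ A / ((1 - A) * (1 - r ^ 2)) := by
    intro N
    have hgeom := geom_sum_Ico_le_of_lt_one (m := 0) (n := N) (sq_nonneg r) (by nlinarith)
    rw [← range_eq_Ico, pow_zero] at hgeom
    calc _ = A * (∑ n ∈ range N, (r ^ 2) ^ n) / (1 - A) := by rw [mul_sum, sum_div]
      _ ≤ A * (1 / (1 - r ^ 2)) / (1 - A) := by gcongr
      _ = A / ((1 - A) * (1 - r ^ 2)) := by rw [mul_one_div, div_div, mul_comm (1 - r ^ 2)]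
  have hlim := G.tendsto_sum_m_exp_of_lipschitzOnEdges hconn hm (fun n => (pow_pos hr0 n).le)
    (tendsto_pow_atTop_nhds_zero_of_lt_one hr0.le hr1) hLip
    (fun n => (G.sum_m_mul_iterate_heatStep s f n).trans hmean) lam
  have hB : A / ((1 - A) * (1 - r ^ 2)) = lam ^ 2 / (K * (2 - s * K) * (2 - s * lam ^ 2)) := by
    have h1 : (1 - A) * (1 - r ^ 2) ≠ 0 := (mul_pos (by linarith) (by nlinarith)).ne'
    have h2 : K * (2 - s * K) * (2 - s * lam ^ 2) ≠ 0 :=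
      (mul_pos (mul_pos hK (by linarith)) (by linarith)).ne'
    rw [div_eq_div_iff h1 h2]
    ring
  rw [← hB]
  exact Real.le_exp_of_le_mul_exp
    (fun n => sum_nonneg fun x _ => mul_nonneg (G.m_pos x).le (Real.exp_pos _).le)
    hstep hsum hlim

end WeightedGraph

/-- On a finite connected weighted graph with `m(V) = 1`,
`Deg_max ≤ 1`, and `κ(x,y) ≥ K > 0` for all `x ≠ y`: if `⟨f⟩ = 0` and
`‖∇f‖_∞ ≤ 1`, then for every `λ ∈ ℝ`, `⟨e^{λf}⟩ ≤ e^{λ²/(4K)}`. -/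
theorem exponential_moment_bound
    {V : Type*} [Fintype V] (G : WeightedGraph V)
    (hconn : G.toSimpleGraph.Connected)
    (hm : ∑ x : V, G.m x = 1)
    (hDeg : ∀ x, G.Deg x ≤ 1)
    (K : ℝ) (hK : 0 < K)
    (hκ : ∀ x y : V, x ≠ y → K ≤ G.kappa x y)
    (f : V → ℝ)
    (hmean : ∑ x : V, G.m x * f x = 0)
    (hgrad : G.gradNorm f ≤ 1) :
    ∀ lam : ℝ,
      ∑ x : V, G.m x * Real.exp (lam * f x) ≤ Real.exp (lam ^ 2 / (4 * K)) := by
  intro lam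
  let B : ℝ → ℝ := fun s => lam ^ 2 / (K * (2 - s * K) * (2 - s * lam ^ 2))
  have hB : Tendsto B (𝓝[>] 0) (𝓝 (lam ^ 2 / (4 * K))) := by
    have hB0 : ContinuousAt B 0 := by
      refine continuousAt_const.div (by fun_prop) ?_
      simp only [zero_mul, sub_zero]
      positivity
    have h4K : B 0 = lam ^ 2 / (4 * K) := by simp only [B]; ring
    exact h4K ▸ hB0.tendsto.mono_left nhdsWithin_le_nhds
  have hsmall : ∀ᶠ s in 𝓝[>] (0 : ℝ), s < 1 / 2 ∧ s * K < 1 ∧ s * lam ^ 2 < 2 := by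
    refine eventually_nhdsWithin_of_eventually_nhds ?_
    have hcont : ∀ c : ℝ, Tendsto (fun s : ℝ => s * c) (𝓝 0) (𝓝 0) := fun c => by
      simpa using (continuous_mul_const c).tendsto 0
    exact (eventually_lt_nhds (by norm_num)).and (((hcont K).eventually_lt_const one_pos).and
      ((hcont (lam ^ 2)).eventually_lt_const two_pos))
  refine ge_of_tendsto ((Real.continuous_exp.tendsto _).comp hB) ?_
  filter_upwards [hsmall, self_mem_nhdsWithin] with s ⟨hs, hsK, hsl⟩ hs0
  exact G.exponential_moment_bound_of_step hconn hm hDeg hK hκ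
    (G.lipschitzOnEdges_of_gradNorm_le hgrad) hmean lam hs0 hs.le hsK hsl
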